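/- arXiv:2602.02420 — 4 statements merged into one kernel-verified Lean document; each statement's English description precedes it below -/
import Mathlib

section
/- Let n, m ≥ 1, let α : Fin n → ℕ and β : Fin m → ℕ take only positive values, let r be an integer, and let p : Fin n → ℕ, q : Fin m → ℕ satisfy the weight condition Σ_i α i * p i − Σ_j β j * q j = r (as integers). If l is a natural number with Σ_i p i + Σ_j q j ≥ l, then (as real numbers) Σ_i α i * p i ≥ (r + κ·l)/2, where κ = min(min_i α i, min_j β j). -/
open Finset

theorem stmt_1 (n m : ℕ) (hn : 1 ≤ n) (hm : 1 ≤ m)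
    (α : Fin n → ℕ) (β : Fin m → ℕ)
    (hα : ∀ i, 0 < α i) (hβ : ∀ j, 0 < β j)
    (r : ℤ) (p : Fin n → ℕ) (q : Fin m → ℕ)
    (hw : (∑ i, (α i : ℤ) * p i) - ∑ j, (β j : ℤ) * q j = r)
    (l : ℕ) (hl : l ≤ (∑ i, p i) + ∑ j, q j) :
    ((r : ℝ) +
        ((min (Finset.univ.inf' (Finset.univ_nonempty_iff.mpr ⟨⟨0, hn⟩⟩) α)
              (Finset.univ.inf' (Finset.univ_nonempty_iff.mpr ⟨⟨0, hm⟩⟩) β) : ℕ) : ℝ) * (l : ℝ)) / 2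
      ≤ ∑ i, (α i : ℝ) * (p i : ℝ) := by
  set κ := min (Finset.univ.inf' (Finset.univ_nonempty_iff.mpr ⟨⟨0, hn⟩⟩) α)
      (Finset.univ.inf' (Finset.univ_nonempty_iff.mpr ⟨⟨0, hm⟩⟩) β) with hκ
  have h1 : κ * ∑ i, p i ≤ ∑ i, α i * p i := by
    rw [Finset.mul_sum]
    exact Finset.sum_le_sum fun i _ => Nat.mul_le_mul_right _
      (le_trans (min_le_left _ _) (Finset.inf'_le _ (Finset.mem_univ i)))
  have h2 : κ * ∑ j, q j ≤ ∑ j, β j * q j := by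
    rw [Finset.mul_sum]
    exact Finset.sum_le_sum fun j _ => Nat.mul_le_mul_right _
      (le_trans (min_le_right _ _) (Finset.inf'_le _ (Finset.mem_univ j)))
  have h3 : κ * l ≤ (∑ i, α i * p i) + ∑ j, β j * q j :=
    calc κ * l ≤ κ * ((∑ i, p i) + ∑ j, q j) := Nat.mul_le_mul_left _ hl
      _ = κ * ∑ i, p i + κ * ∑ j, q j := by ring
      _ ≤ _ := Nat.add_le_add h1 h2
  have h3' : (κ : ℝ) * l ≤ (∑ i, (α i : ℝ) * p i) + ∑ j, (β j : ℝ) * q j := by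
    exact_mod_cast h3
  have hr : (∑ i, (α i : ℝ) * p i) - ∑ j, (β j : ℝ) * q j = (r : ℝ) := by
    exact_mod_cast congrArg (Int.cast : ℤ → ℝ) hw
  linarith
end

section
/- Let σ be a finite nonempty type, w : σ → ℤ a weight function with w s ≠ 0 for all s, and r an integer. In MvPolynomial ℝ σ, for k : ℕ let P k be the ℝ-span of the monomials with exponent d : σ →₀ ℕ satisfying Σ_s (w s) * (d s) = r and Σ_{s : w s > 0} (w s) * (d s) ≥ k, and let Q l be the ℝ-span of the monomials with exponent d satisfying Σ_s (w s) * (d s) = r and Σ_s d s ≥ l. Then there exist functions L : ℕ → ℕ and K : ℕ → ℕ with L k → ∞ and K l → ∞ such that P k ⊆ Q (L k) for all k and Q l ⊆ P (K l) for all l. In particular the two filtrations (P k) and (Q l) of the weight-r component are equivalent. -/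
/-!
For an exponent `d` of weight `r`, write `|d| = ∑ d s` and `p(d)` for its positive-weight part.
If all weights are at most `M`, then `p(d) ≤ M |d|`; since all weights are nonzero integers,
`|d| ≤ p(d) + (p(d) - r)`, where `p(d) - r` bounds the negative-weight part. So `p(d)` and `|d|`
bound each other linearly, which gives the two inclusions between the spans.
-/

open Finset MvPolynomial

section WeightInequalities

variable {σ : Type*} [Fintype σ] (w : σ → ℤ) (d : σ → ℕ)

theorem sum_filter_pos_mul_nonneg :
    0 ≤ ∑ s ∈ univ.filter (fun s => 0 < w s), w s * (d s : ℤ) :=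
  sum_nonneg fun _ hs => mul_nonneg (mem_filter.1 hs).2.le (Int.natCast_nonneg _)

theorem sum_filter_pos_mul_le_mul_sum {M : ℕ} (hM : ∀ s, w s ≤ M) :
    ∑ s ∈ univ.filter (fun s => 0 < w s), w s * (d s : ℤ) ≤ ((M * ∑ s, d s : ℕ) : ℤ) := by
  push_cast
  rw [sum_filter, mul_sum]
  gcongr with s
  split_ifs
  · exact mul_le_mul_of_nonneg_right (hM s) (Int.natCast_nonneg _)
  · positivity

theorem sum_le_two_mul_sum_filter_pos_sub (hw : ∀ s, w s ≠ 0) :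
    ((∑ s, d s : ℕ) : ℤ) ≤
      2 * ∑ s ∈ univ.filter (fun s => 0 < w s), w s * (d s : ℤ) - ∑ s, w s * (d s : ℤ) := by
  push_cast
  rw [sum_filter, mul_sum, ← sum_sub_distrib]
  gcongr with s
  have hd := Int.natCast_nonneg (d s)
  split_ifs with hpos
  · nlinarith
  · have : w s ≤ -1 := by have := hw s; omega
    nlinarith

end WeightInequalities

theorem stmt_2_general (σ : Type) [Fintype σ] (w : σ → ℤ) (hw : ∀ s, w s ≠ 0) (r : ℤ)
    (P Q : ℕ → Submodule ℝ (MvPolynomial σ ℝ))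
    (hP : ∀ k : ℕ, P k = Submodule.span ℝ
      {f : MvPolynomial σ ℝ | ∃ d : σ →₀ ℕ,
        (∑ s, w s * (d s : ℤ)) = r ∧
        (k : ℤ) ≤ (∑ s ∈ Finset.univ.filter (fun s => 0 < w s), w s * (d s : ℤ)) ∧
        f = MvPolynomial.monomial d (1 : ℝ)})
    (hQ : ∀ l : ℕ, Q l = Submodule.span ℝ
      {f : MvPolynomial σ ℝ | ∃ d : σ →₀ ℕ,
        (∑ s, w s * (d s : ℤ)) = r ∧
        l ≤ (∑ s, d s) ∧
        f = MvPolynomial.monomial d (1 : ℝ)}) :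
    ∃ L K : ℕ → ℕ,
      Filter.Tendsto L Filter.atTop Filter.atTop ∧
      Filter.Tendsto K Filter.atTop Filter.atTop ∧
      (∀ k, P k ≤ Q (L k)) ∧ (∀ l, Q l ≤ P (K l)) := by
  obtain ⟨M, hM⟩ := Finite.exists_le fun s => (w s).toNat
  have hwM : ∀ s, w s ≤ (M + 1 : ℕ) := fun s => by have := hM s; omega
  refine ⟨(· / (M + 1)), fun l => (l - r.natAbs) / 2,
    Nat.tendsto_div_const_atTop M.succ_ne_zero,
    (Nat.tendsto_div_const_atTop two_ne_zero).comp (Filter.tendsto_sub_atTop_nat _), ?_, ?_⟩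
  · intro k
    rw [hP, hQ]
    refine Submodule.span_mono ?_
    rintro _ ⟨d, hr, hk, rfl⟩
    refine ⟨d, hr, Nat.div_le_of_le_mul ?_, rfl⟩
    exact_mod_cast hk.trans (sum_filter_pos_mul_le_mul_sum w d hwM)
  · intro l
    rw [hP, hQ]
    refine Submodule.span_mono ?_
    rintro _ ⟨d, hr, hl, rfl⟩
    refine ⟨d, hr, ?_, rfl⟩
    have hdeg := sum_le_two_mul_sum_filter_pos_sub w d hw
    have hpos := sum_filter_pos_mul_nonneg w d
    push_cast
    omega

theorem stmt_2 (σ : Type) [Fintype σ] [Nonempty σ] (w : σ → ℤ) (hw : ∀ s, w s ≠ 0) (r : ℤ)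
    (P Q : ℕ → Submodule ℝ (MvPolynomial σ ℝ))
    (hP : ∀ k : ℕ, P k = Submodule.span ℝ
      {f : MvPolynomial σ ℝ | ∃ d : σ →₀ ℕ,
        (∑ s, w s * (d s : ℤ)) = r ∧
        (k : ℤ) ≤ (∑ s ∈ Finset.univ.filter (fun s => 0 < w s), w s * (d s : ℤ)) ∧
        f = MvPolynomial.monomial d (1 : ℝ)})
    (hQ : ∀ l : ℕ, Q l = Submodule.span ℝ
      {f : MvPolynomial σ ℝ | ∃ d : σ →₀ ℕ,
        (∑ s, w s * (d s : ℤ)) = r ∧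
        l ≤ (∑ s, d s) ∧
        f = MvPolynomial.monomial d (1 : ℝ)}) :
    ∃ L K : ℕ → ℕ,
      Filter.Tendsto L Filter.atTop Filter.atTop ∧
      Filter.Tendsto K Filter.atTop Filter.atTop ∧
      (∀ k, P k ≤ Q (L k)) ∧ (∀ l, Q l ≤ P (K l)) :=
  stmt_2_general σ w hw r P Q hP hQ
end

section
/- Fix n, m : ℕ, weight functions α : Fin n → ℕ and β : Fin m → ℕ taking only positive values, and an integer r. Let S(r) = { (p, q) : (Fin n → ℕ) × (Fin m → ℕ) | Σ_i α i * p i − Σ_j β j * q j = r }, let M(r) be the set of minimal elements of S(r) with respect to the componentwise order, and let S(0) be the solution set for r = 0. Then S(r) = M(r) + S(0), i.e. S(r) = { x + y | x ∈ M(r), y ∈ S(0) } (as an equality of subsets of (Fin n → ℕ) × (Fin m → ℕ)). -/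
open Finset Pointwise

/-- The set of nonnegative integer solutions of `∑ α i * p i − ∑ β j * q j = r`. -/
def diophSol (n m : ℕ) (α : Fin n → ℕ) (β : Fin m → ℕ) (r : ℤ) :
    Set ((Fin n → ℕ) × (Fin m → ℕ)) :=
  {x | (∑ i, (α i : ℤ) * (x.1 i : ℤ)) - ∑ j, (β j : ℤ) * (x.2 j : ℤ) = r}

private def dioW {n m : ℕ} (α : Fin n → ℕ) (β : Fin m → ℕ)
    (x : (Fin n → ℕ) × (Fin m → ℕ)) : ℤ :=
  (∑ i, (α i : ℤ) * (x.1 i : ℤ)) - ∑ j, (β j : ℤ) * (x.2 j : ℤ)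

private lemma dioW_mem {n m : ℕ} {α : Fin n → ℕ} {β : Fin m → ℕ} {r : ℤ}
    {x : (Fin n → ℕ) × (Fin m → ℕ)} :
    x ∈ diophSol n m α β r ↔ dioW α β x = r := Iff.rfl

private lemma dioW_add {n m : ℕ} (α : Fin n → ℕ) (β : Fin m → ℕ)
    (x y : (Fin n → ℕ) × (Fin m → ℕ)) :
    dioW α β (x + y) = dioW α β x + dioW α β y := by
  simp only [dioW, Prod.fst_add, Prod.snd_add, Pi.add_apply]
  push_cast
  rw [Finset.sum_congr rfl (fun i _ => mul_add ((α i : ℤ)) _ _),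
    Finset.sum_congr rfl (fun j _ => mul_add ((β j : ℤ)) _ _),
    Finset.sum_add_distrib, Finset.sum_add_distrib]
  ring

private lemma sub_add_cancel_of_le {n m : ℕ} {x y : (Fin n → ℕ) × (Fin m → ℕ)}
    (hle : y ≤ x) : (x - y) + y = x := by
  have h1 : y.1 ≤ x.1 := hle.1
  have h2 : y.2 ≤ x.2 := hle.2
  ext i <;> simp only [Prod.fst_add, Prod.snd_add, Prod.fst_sub, Prod.snd_sub,
    Pi.add_apply, Pi.sub_apply]
  · exact Nat.sub_add_cancel (h1 i)
  · exact Nat.sub_add_cancel (h2 i)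

private def dioSize {n m : ℕ} (x : (Fin n → ℕ) × (Fin m → ℕ)) : ℕ :=
  (∑ i, x.1 i) + ∑ j, x.2 j

private lemma dioSize_lt {n m : ℕ} {x y : (Fin n → ℕ) × (Fin m → ℕ)}
    (hle : y ≤ x) (hne : y ≠ x) : dioSize y < dioSize x := by
  have h1 : y.1 ≤ x.1 := hle.1
  have h2 : y.2 ≤ x.2 := hle.2
  have hs1 : ∑ i, y.1 i ≤ ∑ i, x.1 i := Finset.sum_le_sum fun i _ => h1 i
  have hs2 : ∑ j, y.2 j ≤ ∑ j, x.2 j := Finset.sum_le_sum fun j _ => h2 j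
  have : y.1 ≠ x.1 ∨ y.2 ≠ x.2 := by
    by_contra h
    push_neg at h
    exact hne (Prod.ext h.1 h.2)
  rcases this with h | h
  · obtain ⟨i, hi⟩ := Function.ne_iff.mp h
    have : ∑ i, y.1 i < ∑ i, x.1 i :=
      Finset.sum_lt_sum (fun i _ => h1 i) ⟨i, Finset.mem_univ i, lt_of_le_of_ne (h1 i) hi⟩
    exact add_lt_add_of_lt_of_le this hs2
  · obtain ⟨j, hj⟩ := Function.ne_iff.mp h
    have : ∑ j, y.2 j < ∑ j, x.2 j :=
      Finset.sum_lt_sum (fun j _ => h2 j) ⟨j, Finset.mem_univ j, lt_of_le_of_ne (h2 j) hj⟩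
    exact add_lt_add_of_le_of_lt hs1 this

private lemma dioph_decomp {n m : ℕ} (α : Fin n → ℕ) (β : Fin m → ℕ) (r : ℤ) :
    ∀ N (x : (Fin n → ℕ) × (Fin m → ℕ)), dioSize x = N → dioW α β x = r →
      ∃ a b, (dioW α β a = r ∧ ∀ y, dioW α β y = r → y ≤ a → y = a) ∧
        dioW α β b = 0 ∧ x = a + b := by
  intro N
  induction N using Nat.strong_induction_on with
  | _ N ih =>
    intro x hsize hx
    by_cases hmin : ∀ y, dioW α β y = r → y ≤ x → y = x
    · refine ⟨x, 0, ⟨hx, hmin⟩, ?_, ?_⟩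
      · simp [dioW]
      · simp
    · push_neg at hmin
      obtain ⟨y, hy, hyx, hyne⟩ := hmin
      have hlt := dioSize_lt hyx hyne
      obtain ⟨a, b, ha, hb, hy_eq⟩ := ih (dioSize y) (hsize ▸ hlt) y rfl hy
      have hsub : dioW α β (x - y) = 0 := by
        have := dioW_add α β (x - y) y
        rw [sub_add_cancel_of_le hyx] at this
        omega
      refine ⟨a, b + (x - y), ha, ?_, ?_⟩
      · rw [dioW_add, hb, hsub]; ring
      · rw [← add_assoc, ← hy_eq]
        rw [add_comm y (x - y), sub_add_cancel_of_le hyx]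

theorem stmt_9 (n m : ℕ) (α : Fin n → ℕ) (β : Fin m → ℕ)
    (hα : ∀ i, 0 < α i) (hβ : ∀ j, 0 < β j) (r : ℤ) :
    diophSol n m α β r =
      {x : (Fin n → ℕ) × (Fin m → ℕ) |
          x ∈ diophSol n m α β r ∧ ∀ y ∈ diophSol n m α β r, y ≤ x → y = x}
        + diophSol n m α β 0 := by
  ext x
  constructor
  · intro hx
    obtain ⟨a, b, ha, hb, hab⟩ := dioph_decomp α β r (dioSize x) x rfl hx
    exact ⟨a, ⟨ha.1, fun y hy hle => ha.2 y hy hle⟩, b, hb, hab.symm⟩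
  · rintro ⟨a, ⟨ha, -⟩, b, hb, rfl⟩
    have h := dioW_add α β a b
    have ha' : dioW α β a = r := ha
    have hb' : dioW α β b = 0 := hb
    show dioW α β (a + b) = r
    rw [h, ha', hb', add_zero]
end

section
/- In MvPolynomial ℝ (ℕ ⊕ ℕ), assign to the variable X (Sum.inl i) the weight i + 1 and to X (Sum.inr i) the weight −(i + 1) (a weight function w : ℕ ⊕ ℕ → ℤ), and set f_k = Σ_{i < k} X (Sum.inl i) * X (Sum.inr i). Let I be the ideal generated by all the variables, and for p : ℕ let F p be the ideal generated by the set of polynomials that are weighted homogeneous of some degree m ≥ p with respect to w. Then: (a) the sequence (f_k) is Cauchy with respect to the filtration (F p), i.e. for every p there exists N such that f_k − f_j ∈ F p for all j, k ≥ N; and (b) (f_k) is not Cauchy with respect to the filtration (I^l), because f_{k+1} − f_k = X (Sum.inl k) * X (Sum.inr k) ∉ I^3 for every k. -/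
open MvPolynomial

theorem Finset.sum_range_sub_sum_range_mem {M S : Type*} [AddCommGroup M] [SetLike S M]
    [AddSubgroupClass S M] {s : S} {t : ℕ → M} {N : ℕ} (ht : ∀ i, N ≤ i → t i ∈ s)
    {j k : ℕ} (hj : N ≤ j) (hk : N ≤ k) :
    ∑ i ∈ range k, t i - ∑ i ∈ range j, t i ∈ s := by
  wlog hjk : j ≤ k generalizing j k
  · simpa using neg_mem (this hk hj (le_of_not_ge hjk))
  rw [← sum_Ico_eq_sub _ hjk]
  exact sum_mem fun i hi => ht i (hj.trans (mem_Ico.mp hi).1)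

namespace MvPolynomial

variable {σ R : Type*} [CommSemiring R]

theorem X_mul_X_notMem_pow_idealOfVars [Nontrivial R] (i j : σ) :
    X i * X j ∉ idealOfVars σ R ^ 3 := by
  rw [X, X, monomial_mul, one_mul, monomial_mem_pow_idealOfVars_iff _ _ one_ne_zero,
    map_add, Finsupp.degree_single, Finsupp.degree_single]
  omega

/-- The filtration `F^p` of the paper. -/
noncomputable def weightFiltration (w : σ → ℤ) (p : ℤ) : Ideal (MvPolynomial σ R) :=
  Ideal.span {g | ∃ m, p ≤ m ∧ IsWeightedHomogeneous w g m}

theorem X_mem_weightFiltration {w : σ → ℤ} {p : ℤ} {i : σ} (h : p ≤ w i) :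
    X i ∈ weightFiltration (R := R) w p :=
  Ideal.subset_span ⟨w i, h, isWeightedHomogeneous_X R w i⟩

end MvPolynomial

theorem stmt_13
    (w : ℕ ⊕ ℕ → ℤ)
    (hwdef : w = Sum.elim (fun i : ℕ => (i : ℤ) + 1) (fun i : ℕ => -((i : ℤ) + 1)))
    (f : ℕ → MvPolynomial (ℕ ⊕ ℕ) ℝ)
    (hf : ∀ k, f k = ∑ i ∈ Finset.range k,
      MvPolynomial.X (Sum.inl i) * MvPolynomial.X (Sum.inr i))
    (I : Ideal (MvPolynomial (ℕ ⊕ ℕ) ℝ))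
    (hI : I = Ideal.span (Set.range (MvPolynomial.X : ℕ ⊕ ℕ → MvPolynomial (ℕ ⊕ ℕ) ℝ)))
    (F : ℕ → Ideal (MvPolynomial (ℕ ⊕ ℕ) ℝ))
    (hF : ∀ p : ℕ, F p = Ideal.span
      {g : MvPolynomial (ℕ ⊕ ℕ) ℝ |
        ∃ m : ℤ, (p : ℤ) ≤ m ∧ MvPolynomial.IsWeightedHomogeneous w g m}) :
    (∀ p : ℕ, ∃ N : ℕ, ∀ j k : ℕ, N ≤ j → N ≤ k → f k - f j ∈ F p) ∧
    (∀ k : ℕ,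
      f (k + 1) - f k = MvPolynomial.X (Sum.inl k) * MvPolynomial.X (Sum.inr k) ∧
      MvPolynomial.X (Sum.inl k) * MvPolynomial.X (Sum.inr k) ∉ I ^ 3) := by
  refine ⟨fun p => ⟨p, fun j k hj hk => ?_⟩,
    fun k => ⟨?_, hI ▸ X_mul_X_notMem_pow_idealOfVars _ _⟩⟩
  · -- `ξ_i η_i` has weight `0`, yet lies in the ideal `F^p` once its factor `ξ_i` does.
    have hterm : ∀ i, p ≤ i →
        X (Sum.inl i) * X (Sum.inr i) ∈ weightFiltration (R := ℝ) w p :=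
      fun i hi => Ideal.mul_mem_right _ _ <| X_mem_weightFiltration <| by
        simp only [hwdef, Sum.elim_inl]; omega
    rw [hf, hf, hF]
    exact Finset.sum_range_sub_sum_range_mem hterm hj hk
  · rw [hf, hf, Finset.sum_range_succ, add_sub_cancel_left]
end
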